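/- Let ν be a Lévy measure on ℝ with ∫_{{|y| > 1}} log|y| ν(dy) < ∞, let (β_n)_{n≥1} be a bounded sequence of positive real numbers, and let (γ_n)_{n≥1} be positive real numbers with ∑_{n≥1} 1/γ_n < ∞. Then ∑_{n≥1} (1/γ_n) ∫_{1/β_n}^{e^{γ_n}/β_n} ( ψ₀(u)/u³ + ψ₁(u)/u ) du < ∞, where ψ₀(u) = ∫_{{|y| ≤ u}} y² ν(dy) and ψ₁(u) = ν({y : |y| > u}). -/

import Mathlib

open MeasureTheory Set ENNReal

/-!
Since `β n ≤ C`, every interval of integration lies in `(C⁻¹, ∞)`, so the `n`-th term is at most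
`(1/γ n) · K` with `K = ∫_{C⁻¹}^∞ (ψ₀(u)/u³ + ψ₁(u)/u) du`, and it suffices that `K < ∞`.
Both parts of `K` are computed by Tonelli: with `c = C⁻¹`,
`∫_c^∞ ψ₀(u)/u³ du = ∫ y² ∫_{max c |y|}^∞ u⁻³ du ν(dy) ≲ ∫ min 1 y² dν` and
`∫_c^∞ ψ₁(u)/u du = ∫_{|y| > c} log (|y|/c) ν(dy)`, which is at most
`log (1/c) · ν(|y| > c) + ∫_{|y| > 1} log |y| dν`.
-/

theorem lintegral_setLIntegral_mul_comm {α β : Type*} [MeasurableSpace α] [MeasurableSpace β]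
    {μ : Measure α} {ν : Measure β} [SFinite μ] [SFinite ν] {R : Set (α × β)}
    (hR : MeasurableSet R) {f : β → ℝ≥0∞} {g : α → ℝ≥0∞} (hf : Measurable f) (hg : Measurable g) :
    ∫⁻ x, (∫⁻ y in {y | (x, y) ∈ R}, f y ∂ν) * g x ∂μ
      = ∫⁻ y, f y * ∫⁻ x in {x | (x, y) ∈ R}, g x ∂μ ∂ν := by
  set F : α × β → ℝ≥0∞ := R.indicator fun p => f p.2 * g p.1
  have hF : Measurable F := ((hf.comp measurable_snd).mul (hg.comp measurable_fst)).indicator hR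
  calc ∫⁻ x, (∫⁻ y in {y | (x, y) ∈ R}, f y ∂ν) * g x ∂μ
      = ∫⁻ x, ∫⁻ y, F (x, y) ∂ν ∂μ := by
        congr with x
        have hs : MeasurableSet {y | (x, y) ∈ R} := measurable_prodMk_left hR
        rw [← lintegral_mul_const _ hf, ← lintegral_indicator hs]
        rfl
    _ = ∫⁻ y, ∫⁻ x, F (x, y) ∂μ ∂ν := lintegral_lintegral_swap hF.aemeasurable
    _ = ∫⁻ y, f y * ∫⁻ x in {x | (x, y) ∈ R}, g x ∂μ ∂ν := by
        congr with y
        have hs : MeasurableSet {x | (x, y) ∈ R} := measurable_prodMk_right hR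
        rw [← lintegral_const_mul _ hg, ← lintegral_indicator hs]
        rfl

theorem lintegral_Ioi_rpow_of_lt {a m : ℝ} (ha : a < -1) (hm : 0 < m) :
    ∫⁻ u in Ioi m, ENNReal.ofReal (u ^ a) = ENNReal.ofReal (-m ^ (a + 1) / (a + 1)) := by
  rw [← ofReal_integral_eq_lintegral_ofReal (integrableOn_Ioi_rpow_of_lt ha hm)
      (ae_restrict_of_forall_mem measurableSet_Ioi fun u hu => Real.rpow_nonneg (hm.trans hu).le _),
    integral_Ioi_rpow_of_lt ha hm]

theorem lintegral_Ioi_inv_pow_three {m : ℝ} (hm : 0 < m) :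
    ∫⁻ u in Ioi m, (ENNReal.ofReal (u ^ 3))⁻¹ = ENNReal.ofReal (2 * m ^ 2)⁻¹ := by
  have hrpow : ∀ u ∈ Ioi m, (ENNReal.ofReal (u ^ 3))⁻¹ = ENNReal.ofReal (u ^ (-3 : ℝ)) := by
    intro u hu
    rw [← ofReal_inv_of_pos (pow_pos (hm.trans hu) 3), Real.rpow_neg (hm.trans hu).le]
    norm_cast
  rw [setLIntegral_congr_fun measurableSet_Ioi hrpow, lintegral_Ioi_rpow_of_lt (by norm_num) hm]
  congr 1
  rw [show (-3 : ℝ) + 1 = -(2 : ℕ) by norm_num, Real.rpow_neg hm.le, Real.rpow_natCast]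
  field_simp
  ring

theorem lintegral_Ioo_inv {a b : ℝ} (ha : 0 < a) (hab : a ≤ b) :
    ∫⁻ u in Ioo a b, (ENNReal.ofReal u)⁻¹ = ENNReal.ofReal (Real.log (b / a)) := by
  have h : ∀ u ∈ Ioo a b, (ENNReal.ofReal u)⁻¹ = ENNReal.ofReal u⁻¹ :=
    fun u hu => (ofReal_inv_of_pos (ha.trans hu.1)).symm
  have hint : IntegrableOn (fun u : ℝ => u⁻¹) (Ioc a b) :=
    (continuousOn_inv₀.mono fun u hu => (ha.trans_le hu.1).ne').integrableOn_compact
      isCompact_Icc |>.mono_set Ioc_subset_Icc_self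
  rw [setLIntegral_congr_fun measurableSet_Ioo h, restrict_Ioo_eq_restrict_Ioc,
    ← ofReal_integral_eq_lintegral_ofReal hint
      (ae_restrict_of_forall_mem measurableSet_Ioc fun u hu => inv_nonneg.2 (ha.trans hu.1).le),
    ← intervalIntegral.integral_of_le hab, integral_inv_of_pos ha (ha.trans_le hab)]

theorem sq_div_max_sq_le_min_div {c y : ℝ} (hc : 0 < c) :
    y ^ 2 / max c |y| ^ 2 ≤ min 1 (y ^ 2) / min 1 c ^ 2 := by
  have hc' : 0 < min 1 c := lt_min one_pos hc
  have hcM : min 1 c ≤ max c |y| := (min_le_right _ _).trans (le_max_left _ _)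
  have hyM : y ^ 2 ≤ max c |y| ^ 2 := by
    rw [← sq_abs]; exact pow_le_pow_left₀ (abs_nonneg y) (le_max_right _ _) 2
  rw [div_le_div_iff₀ (by positivity) (by positivity)]
  rcases le_total (y ^ 2) 1 with hy | hy
  · rw [min_eq_right hy]
    exact mul_le_mul_of_nonneg_left (pow_le_pow_left₀ hc'.le hcM 2) (sq_nonneg y)
  · rw [min_eq_left hy, one_mul]
    have : min 1 c ^ 2 ≤ 1 := pow_le_one₀ hc'.le (min_le_left _ _)
    nlinarith

/-- `ψ₀(u)` of the paper. -/
noncomputable def truncSecondMoment (ν : Measure ℝ) (u : ℝ) : ℝ≥0∞ :=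
  ∫⁻ y in {y : ℝ | |y| ≤ u}, ENNReal.ofReal (y ^ 2) ∂ν

/-- `ψ₁(u)` of the paper. -/
noncomputable def tailMass (ν : Measure ℝ) (u : ℝ) : ℝ≥0∞ :=
  ν {y : ℝ | u < |y|}

theorem monotone_truncSecondMoment (ν : Measure ℝ) : Monotone (truncSecondMoment ν) :=
  fun _ _ hab => lintegral_mono_set fun _ hy => le_trans hy hab

theorem tailMass_ne_top {ν : Measure ℝ}
    (hνI : ∫⁻ y : ℝ, ENNReal.ofReal (min 1 (y ^ 2)) ∂ν ≠ ⊤) {c : ℝ} (hc : 0 < c) :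
    tailMass ν c ≠ ⊤ := by
  have hε : ENNReal.ofReal (min 1 (c ^ 2)) ≠ 0 := by
    simpa [ENNReal.ofReal_eq_zero] using hc.ne'
  refine ne_top_of_le_ne_top (ENNReal.div_ne_top hνI hε) <| (measure_mono ?_).trans
    (meas_ge_le_lintegral_div (by fun_prop) hε ENNReal.ofReal_ne_top)
  intro y hy
  have : c ^ 2 ≤ y ^ 2 := by
    rw [← sq_abs y]; exact pow_le_pow_left₀ hc.le (le_of_lt hy) 2
  exact ENNReal.ofReal_le_ofReal (min_le_min le_rfl this)

theorem sq_mul_lintegral_inv_cube_le {c : ℝ} (hc : 0 < c) (y : ℝ) :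
    ENNReal.ofReal (y ^ 2) * ∫⁻ u in Ici |y| ∩ Ioi c, (ENNReal.ofReal (u ^ 3))⁻¹
      ≤ ENNReal.ofReal (2 * min 1 c ^ 2)⁻¹ * ENNReal.ofReal (min 1 (y ^ 2)) := by
  have hM : 0 < max c |y| := hc.trans_le (le_max_left _ _)
  have hset : Ici |y| ∩ Ioi c ⊆ Ici (max c |y|) := fun u hu => mem_Ici.2 (max_le hu.2.le hu.1)
  calc ENNReal.ofReal (y ^ 2) * ∫⁻ u in Ici |y| ∩ Ioi c, (ENNReal.ofReal (u ^ 3))⁻¹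
      ≤ ENNReal.ofReal (y ^ 2) * ∫⁻ u in Ioi (max c |y|), (ENNReal.ofReal (u ^ 3))⁻¹ := by
        rw [restrict_Ioi_eq_restrict_Ici]
        exact mul_le_mul_right (lintegral_mono_set hset) _
    _ = ENNReal.ofReal (y ^ 2 / max c |y| ^ 2 / 2) := by
        rw [lintegral_Ioi_inv_pow_three hM, ← ENNReal.ofReal_mul (sq_nonneg y)]
        congr 1
        field_simp
    _ ≤ ENNReal.ofReal (min 1 (y ^ 2) / min 1 c ^ 2 / 2) :=
        ENNReal.ofReal_le_ofReal <|
          div_le_div_of_nonneg_right (sq_div_max_sq_le_min_div hc) two_pos.le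
    _ = ENNReal.ofReal (2 * min 1 c ^ 2)⁻¹ * ENNReal.ofReal (min 1 (y ^ 2)) := by
        rw [← ENNReal.ofReal_mul (by positivity)]
        congr 1
        field_simp

theorem lintegral_Iio_abs_inter_Ioi_inv_le {c : ℝ} (hc : 0 < c) (y : ℝ) :
    ∫⁻ u in Iio |y| ∩ Ioi c, (ENNReal.ofReal u)⁻¹
      ≤ ENNReal.ofReal (-Real.log c) * {y : ℝ | c < |y|}.indicator 1 y
        + {y : ℝ | 1 < |y|}.indicator (fun y => ENNReal.ofReal (Real.log |y|)) y := by
  rcases le_or_gt |y| c with hy | hy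
  · simp [Iio_inter_Ioi, Ioo_eq_empty_of_le hy]
  rw [Iio_inter_Ioi, lintegral_Ioo_inv hc hy.le,
    indicator_of_mem (show y ∈ {y : ℝ | c < |y|} from hy), Pi.one_apply, mul_one,
    Real.log_div (hc.trans hy).ne' hc.ne', sub_eq_neg_add]
  refine ENNReal.ofReal_add_le.trans (add_le_add le_rfl ?_)
  rcases le_or_gt |y| 1 with hy1 | hy1
  · rw [ENNReal.ofReal_eq_zero.2 (Real.log_nonpos (abs_nonneg y) hy1)]
    exact zero_le
  · rw [indicator_of_mem (show y ∈ {y : ℝ | 1 < |y|} from hy1)]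

theorem lintegral_Ioi_truncSecondMoment_div_ne_top {ν : Measure ℝ} [SFinite ν]
    (hνI : ∫⁻ y : ℝ, ENNReal.ofReal (min 1 (y ^ 2)) ∂ν ≠ ⊤) {c : ℝ} (hc : 0 < c) :
    ∫⁻ u in Ioi c, truncSecondMoment ν u / ENNReal.ofReal (u ^ 3) ≠ ⊤ := by
  have hR : MeasurableSet {p : ℝ × ℝ | |p.2| ≤ p.1} :=
    measurableSet_le measurable_snd.abs measurable_fst
  rw [← lt_top_iff_ne_top]
  calc ∫⁻ u in Ioi c, truncSecondMoment ν u / ENNReal.ofReal (u ^ 3)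
      = ∫⁻ y, ENNReal.ofReal (y ^ 2)
          * (∫⁻ u in Ici |y| ∩ Ioi c, (ENNReal.ofReal (u ^ 3))⁻¹) ∂ν := by
        simp only [truncSecondMoment, div_eq_mul_inv]
        refine (lintegral_setLIntegral_mul_comm hR (by fun_prop) (by fun_prop)).trans ?_
        congr with y
        rw [← Measure.restrict_restrict measurableSet_Ici]
        rfl
    _ ≤ ∫⁻ y, ENNReal.ofReal (2 * min 1 c ^ 2)⁻¹ * ENNReal.ofReal (min 1 (y ^ 2)) ∂ν :=
        lintegral_mono fun y => sq_mul_lintegral_inv_cube_le hc y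
    _ = ENNReal.ofReal (2 * min 1 c ^ 2)⁻¹ * ∫⁻ y, ENNReal.ofReal (min 1 (y ^ 2)) ∂ν :=
        lintegral_const_mul _ (by fun_prop)
    _ < ⊤ := mul_lt_top ofReal_lt_top hνI.lt_top

theorem lintegral_Ioi_tailMass_div_ne_top {ν : Measure ℝ} [SFinite ν]
    (hνI : ∫⁻ y : ℝ, ENNReal.ofReal (min 1 (y ^ 2)) ∂ν ≠ ⊤)
    (hlog : ∫⁻ y in {y : ℝ | 1 < |y|}, ENNReal.ofReal (Real.log |y|) ∂ν ≠ ⊤) {c : ℝ} (hc : 0 < c) :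
    ∫⁻ u in Ioi c, tailMass ν u / ENNReal.ofReal u ≠ ⊤ := by
  have hR : MeasurableSet {p : ℝ × ℝ | p.1 < |p.2|} :=
    measurableSet_lt measurable_fst measurable_snd.abs
  have hc_tail : MeasurableSet {y : ℝ | c < |y|} := measurableSet_lt measurable_const measurable_abs
  have h1_tail : MeasurableSet {y : ℝ | 1 < |y|} := measurableSet_lt measurable_const measurable_abs
  rw [← lt_top_iff_ne_top]
  calc ∫⁻ u in Ioi c, tailMass ν u / ENNReal.ofReal u
      = ∫⁻ y, 1 * (∫⁻ u in Iio |y| ∩ Ioi c, (ENNReal.ofReal u)⁻¹) ∂ν := by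
        simp only [tailMass, div_eq_mul_inv, ← setLIntegral_one]
        refine (lintegral_setLIntegral_mul_comm hR measurable_const (by fun_prop)).trans ?_
        congr with y
        rw [← Measure.restrict_restrict measurableSet_Iio]
        rfl
    _ ≤ ∫⁻ y, ENNReal.ofReal (-Real.log c) * {y : ℝ | c < |y|}.indicator 1 y
          + {y : ℝ | 1 < |y|}.indicator (fun y => ENNReal.ofReal (Real.log |y|)) y ∂ν :=
        lintegral_mono fun y => (one_mul _).trans_le (lintegral_Iio_abs_inter_Ioi_inv_le hc y)
    _ = ENNReal.ofReal (-Real.log c) * tailMass ν c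
          + ∫⁻ y in {y : ℝ | 1 < |y|}, ENNReal.ofReal (Real.log |y|) ∂ν := by
        rw [lintegral_add_left (by fun_prop), lintegral_const_mul _ (by fun_prop),
          lintegral_indicator_one hc_tail, lintegral_indicator h1_tail, tailMass]
    _ < ⊤ := add_lt_top.2 ⟨mul_lt_top ofReal_lt_top (tailMass_ne_top hνI hc).lt_top, hlog.lt_top⟩

theorem sum_finite_of_log_moment_general
    (ν : Measure ℝ) [SigmaFinite ν]
    (hνI : ∫⁻ y : ℝ, ENNReal.ofReal (min 1 (y ^ 2)) ∂ν ≠ ⊤)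
    (hlog : ∫⁻ y in {y : ℝ | 1 < |y|}, ENNReal.ofReal (Real.log |y|) ∂ν ≠ ⊤)
    (β γ : ℕ → ℝ) (hβ : ∀ n, 0 < β n)
    (hβbd : ∃ C : ℝ, ∀ n, β n ≤ C)
    (hγsum : Summable (fun n => 1 / γ n)) :
    (∑' n, ENNReal.ofReal (1 / γ n)
        * ∫⁻ u in Set.Ioc (1 / β n) (Real.exp (γ n) / β n),
            ((∫⁻ y in {y : ℝ | |y| ≤ u}, ENNReal.ofReal (y ^ 2) ∂ν)
                / ENNReal.ofReal (u ^ 3)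
              + ν {y : ℝ | u < |y|} / ENNReal.ofReal u)) ≠ ⊤ := by
  obtain ⟨C, hC⟩ := hβbd
  have hC_pos : 0 < C := (hβ 0).trans_le (hC 0)
  have hsub : ∀ n, Ioc (1 / β n) (Real.exp (γ n) / β n) ⊆ Ioi C⁻¹ := fun n _ hu =>
    (one_div (β n) ▸ inv_anti₀ (hβ n) (hC n)).trans_lt hu.1
  have hK : ∫⁻ u in Ioi C⁻¹,
      (truncSecondMoment ν u / ENNReal.ofReal (u ^ 3) + tailMass ν u / ENNReal.ofReal u) ≠ ⊤ := by
    have hmeas : Measurable fun u => truncSecondMoment ν u / ENNReal.ofReal (u ^ 3) :=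
      (monotone_truncSecondMoment ν).measurable.div (by fun_prop)
    rw [lintegral_add_left hmeas]
    exact add_ne_top.2 ⟨lintegral_Ioi_truncSecondMoment_div_ne_top hνI (inv_pos.2 hC_pos),
      lintegral_Ioi_tailMass_div_ne_top hνI hlog (inv_pos.2 hC_pos)⟩
  have hγ : ∑' n, ENNReal.ofReal (1 / γ n) ≠ ⊤ :=
    ENNReal.tsum_coe_ne_top_iff_summable.2 hγsum.toNNReal
  refine ne_top_of_le_ne_top (mul_ne_top hγ hK) ?_
  rw [← ENNReal.tsum_mul_right]
  exact ENNReal.tsum_le_tsum fun n => mul_le_mul_right (lintegral_mono_set (hsub n)) _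

/-- If `ν` has a finite logarithmic moment at infinity, `(β_n)` is bounded and
`∑ 1/γ_n < ∞`, then `∑ (1/γ_n) ∫_{1/β_n}^{e^{γ_n}/β_n} (ψ₀(u)/u³ + ψ₁(u)/u) du < ∞`. -/
theorem sum_finite_of_log_moment
    (ν : Measure ℝ) [SigmaFinite ν]
    (hν0 : ν {0} = 0)
    (hνI : ∫⁻ y : ℝ, ENNReal.ofReal (min 1 (y ^ 2)) ∂ν ≠ ⊤)
    (hlog : ∫⁻ y in {y : ℝ | 1 < |y|}, ENNReal.ofReal (Real.log |y|) ∂ν ≠ ⊤)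
    (β γ : ℕ → ℝ) (hβ : ∀ n, 0 < β n) (hγ : ∀ n, 0 < γ n)
    (hβbd : ∃ C : ℝ, ∀ n, β n ≤ C)
    (hγsum : Summable (fun n => 1 / γ n)) :
    (∑' n, ENNReal.ofReal (1 / γ n)
        * ∫⁻ u in Set.Ioc (1 / β n) (Real.exp (γ n) / β n),
            ((∫⁻ y in {y : ℝ | |y| ≤ u}, ENNReal.ofReal (y ^ 2) ∂ν)
                / ENNReal.ofReal (u ^ 3)
              + ν {y : ℝ | u < |y|} / ENNReal.ofReal u)) ≠ ⊤ :=
  sum_finite_of_log_moment_general ν hνI hlog β γ hβ hβbd hγsum
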